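/- arXiv:2403.18925 — 3 statements merged into one kernel-verified Lean document; each statement's English description precedes it below -/
import Mathlib

section
/- Let 𝓘 be an operation from E to E and let D : E → E satisfy s(D(b)) = 𝓘(s)(b) for all s ∈ S and b ∈ E, and set a = D(u). Then D(a) = a (a is 𝓘-repeatable) if and only if for every s ∈ S, every λ ∈ (0,1] and every t ∈ S with 𝓘(s) = λ • t one has 𝓘(t)(u) = 1 (equivalently, extending 𝓘 to substates by homogeneity, 𝓘(𝓘(s))(u) = 𝓘(s)(u) for all s ∈ S). -/
/-- `S` is a nonempty convex order-determining set of states on the interval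
effect algebra `[0, u]` of `V`. -/
def IsStateSpace {V : Type*} [AddCommGroup V] [PartialOrder V] [IsOrderedAddMonoid V] [Module ℝ V]
    (u : V) (S : Set (V →ₗ[ℝ] ℝ)) : Prop :=
  S.Nonempty ∧
  (∀ s ∈ S, (∀ x : V, 0 ≤ x → 0 ≤ s x) ∧ s u = 1) ∧
  (∀ s ∈ S, ∀ s' ∈ S, ∀ t : ℝ, 0 ≤ t → t ≤ 1 → t • s + (1 - t) • s' ∈ S) ∧
  (∀ v w : V, (∀ s ∈ S, s v ≤ s w) → v ≤ w)

/-- An operation from the effect algebra of `V₁` to that of `V₂`: an affine map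
sending every state in `S₁` to a substate of `S₂`. -/
def IsOperation {V₁ V₂ : Type*} [AddCommGroup V₁] [PartialOrder V₁] [IsOrderedAddMonoid V₁] [Module ℝ V₁]
    [AddCommGroup V₂] [PartialOrder V₂] [IsOrderedAddMonoid V₂] [Module ℝ V₂]
    (S₁ : Set (V₁ →ₗ[ℝ] ℝ)) (S₂ : Set (V₂ →ₗ[ℝ] ℝ))
    (I : (V₁ →ₗ[ℝ] ℝ) → (V₂ →ₗ[ℝ] ℝ)) : Prop :=
  (∀ s ∈ S₁, ∃ lam : ℝ, 0 ≤ lam ∧ lam ≤ 1 ∧ ∃ t ∈ S₂, I s = lam • t) ∧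
  (∀ s ∈ S₁, ∀ s' ∈ S₁, ∀ t : ℝ, 0 ≤ t → t ≤ 1 →
    I (t • s + (1 - t) • s') = t • I s + (1 - t) • I s')

/-! For `s ∈ S` with `I s = λ • t`, evaluating through `D` gives `s a = λ` and
`s (D a) = λ · I t u`. Since `S` is order-determining, `D a = a` means exactly that
`λ · I t u = λ` for all such decompositions, i.e. `I t u = 1` whenever `λ ≠ 0`. -/

section

variable {V : Type*} [AddCommGroup V] [PartialOrder V] [Module ℝ V]

theorem eq_of_forall_apply_eq {S : Set (V →ₗ[ℝ] ℝ)}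
    (hord : ∀ v w : V, (∀ s ∈ S, s v ≤ s w) → v ≤ w) {v w : V}
    (h : ∀ s ∈ S, s v = s w) : v = w :=
  le_antisymm (hord _ _ fun s hs => (h s hs).le) (hord _ _ fun s hs => (h s hs).ge)

variable {u : V} {S : Set (V →ₗ[ℝ] ℝ)} {I : (V →ₗ[ℝ] ℝ) → (V →ₗ[ℝ] ℝ)} {D : V → V}
  (hD : ∀ s ∈ S, ∀ b : V, 0 ≤ b → b ≤ u → s (D b) = I s b) (hu0 : 0 ≤ u)
  {s t : V →ₗ[ℝ] ℝ} {lam : ℝ} (hs : s ∈ S) (hIs : I s = lam • t)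
include hD hu0 hs hIs

theorem apply_D_unit_of_eq_smul (htu : t u = 1) : s (D u) = lam := by
  rw [hD s hs u hu0 le_rfl, hIs, LinearMap.smul_apply, htu, smul_eq_mul, mul_one]

theorem apply_D_D_unit_of_eq_smul (hDE : ∀ b : V, 0 ≤ b → b ≤ u → 0 ≤ D b ∧ D b ≤ u)
    (ht : t ∈ S) : s (D (D u)) = lam * I t u := by
  obtain ⟨hDu0, hDu⟩ := hDE u hu0 le_rfl
  rw [hD s hs _ hDu0 hDu, hIs, LinearMap.smul_apply, hD t ht u hu0 le_rfl, smul_eq_mul]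

end

theorem stmt_5_general
    {V : Type*} [AddCommGroup V] [PartialOrder V] [IsOrderedAddMonoid V] [Module ℝ V]
    (u : V) (hu0 : 0 ≤ u)
    (S : Set (V →ₗ[ℝ] ℝ)) (hS : IsStateSpace u S)
    (I : (V →ₗ[ℝ] ℝ) → (V →ₗ[ℝ] ℝ)) (hI : IsOperation S S I)
    (D : V → V) (hDE : ∀ b : V, 0 ≤ b → b ≤ u → 0 ≤ D b ∧ D b ≤ u)
    (hD : ∀ s ∈ S, ∀ b : V, 0 ≤ b → b ≤ u → s (D b) = I s b)
    (a : V) (ha : a = D u) :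
    D a = a ↔
      ∀ s ∈ S, ∀ lam : ℝ, 0 < lam → lam ≤ 1 → ∀ t ∈ S, I s = lam • t →
        I t u = 1 := by
  obtain ⟨-, hstate, -, hord⟩ := hS
  subst ha
  constructor
  · intro hrep s hs lam hlam _ t ht hIs
    have hval := congrArg s hrep
    rw [apply_D_D_unit_of_eq_smul hD hu0 hs hIs hDE ht,
      apply_D_unit_of_eq_smul hD hu0 hs hIs (hstate t ht).2] at hval
    exact (mul_eq_left₀ hlam.ne').1 hval
  · intro h
    refine eq_of_forall_apply_eq hord fun s hs => ?_
    obtain ⟨lam, hlam0, hlam1, t, ht, hIs⟩ := hI.1 s hs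
    rw [apply_D_D_unit_of_eq_smul hD hu0 hs hIs hDE ht,
      apply_D_unit_of_eq_smul hD hu0 hs hIs (hstate t ht).2]
    rcases hlam0.eq_or_lt with rfl | hpos
    · exact zero_mul _
    · rw [h s hs lam hpos hlam1 t ht hIs, mul_one]

theorem stmt_5
    {V : Type*} [AddCommGroup V] [PartialOrder V] [IsOrderedAddMonoid V] [Module ℝ V]
    (hsmul : ∀ (c : ℝ) (x : V), 0 ≤ c → 0 ≤ x → 0 ≤ c • x)
    (u : V) (hu0 : 0 ≤ u) (hune : u ≠ 0)
    (S : Set (V →ₗ[ℝ] ℝ)) (hS : IsStateSpace u S)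
    (I : (V →ₗ[ℝ] ℝ) → (V →ₗ[ℝ] ℝ)) (hI : IsOperation S S I)
    (D : V → V) (hDE : ∀ b : V, 0 ≤ b → b ≤ u → 0 ≤ D b ∧ D b ≤ u)
    (hD : ∀ s ∈ S, ∀ b : V, 0 ≤ b → b ≤ u → s (D b) = I s b)
    (a : V) (ha : a = D u) :
    D a = a ↔
      ∀ s ∈ S, ∀ lam : ℝ, 0 < lam → lam ≤ 1 → ∀ t ∈ S, I s = lam • t →
        I t u = 1 :=
  stmt_5_general u hu0 S hS I hI D hDE hD a ha
end

section
/- Let (𝓘ₓ)_{x∈Ω} be an instrument from E₁ to E₂ and let Dₓ : E₂ → E₁ satisfy s(Dₓ(b)) = 𝓘ₓ(s)(b) for all s ∈ S₁, b ∈ E₂ and x ∈ Ω. Let B = (B_y)_{y∈Ω_B} be an observable on E₂, set Aₓ := Dₓ(u₂) and (A[𝓘]B)_{xy} := Dₓ(B_y). Then: (A[𝓘]B) is a bi-observable on E₁, i.e. ∑_{x∈Ω} ∑_{y∈Ω_B} Dₓ(B_y) = u₁; A = (Aₓ) is an observable on E₁; ∑_{y∈Ω_B} Dₓ(B_y) =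 Aₓ for every x ∈ Ω; and the family (B|𝓘 A)_y := ∑_{x∈Ω} Dₓ(B_y) is an observable on E₁. Hence A and B|𝓘 A coexist with joint bi-observable A[𝓘]B. -/
/-!
Every claim is an equality or inequality in `V₁`, and the order-determining states of `S₁`
reduce it to one about real numbers. For `s ∈ S₁`, `s (∑ₓ Dₓ b)` is the value at `b` of the
state `∑ₓ 𝓘ₓ(s) ∈ S₂`, which gives positivity, `≤ u₁` and normalisation; and
`s (Dₓ (∑_y B_y)) = ∑_y s (Dₓ B_y)` because `𝓘ₓ(s)` is linear, so `∑_y Dₓ B_y = Dₓ u₂`.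
-/

namespace IsStateSpace

variable {V : Type*} [AddCommGroup V] [PartialOrder V] [IsOrderedAddMonoid V] [Module ℝ V]
  {u : V} {S : Set (V →ₗ[ℝ] ℝ)}

theorem ext (hS : IsStateSpace u S) {v w : V} (h : ∀ s ∈ S, s v = s w) : v = w :=
  le_antisymm (hS.2.2.2 v w fun s hs => (h s hs).le) (hS.2.2.2 w v fun s hs => (h s hs).ge)

theorem apply_mem_Icc (hS : IsStateSpace u S) {s : V →ₗ[ℝ] ℝ} (hs : s ∈ S) {b : V}
    (hb0 : 0 ≤ b) (hbu : b ≤ u) : s b ∈ Set.Icc (0 : ℝ) 1 := by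
  obtain ⟨hpos, hu⟩ := hS.2.1 s hs
  have hcompl := hpos (u - b) (sub_nonneg.2 hbu)
  rw [map_sub, hu] at hcompl
  exact ⟨hpos b hb0, by linarith⟩

theorem nonneg_and_le_of_forall_apply_mem_Icc (hS : IsStateSpace u S) {v : V}
    (h : ∀ s ∈ S, s v ∈ Set.Icc (0 : ℝ) 1) : 0 ≤ v ∧ v ≤ u :=
  ⟨hS.2.2.2 0 v fun s hs => by simpa using (h s hs).1,
    hS.2.2.2 v u fun s hs => by simpa [(hS.2.1 s hs).2] using (h s hs).2⟩

end IsStateSpace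

section Dual

variable {V₁ V₂ : Type*} [AddCommGroup V₁] [Module ℝ V₁] [AddCommGroup V₂] [PartialOrder V₂]
  [Module ℝ V₂] {u₁ : V₁} {u₂ : V₂} {S₁ : Set (V₁ →ₗ[ℝ] ℝ)}

theorem apply_sum_of_dual {Ω : Type*} (t : Finset Ω)
    {I : Ω → (V₁ →ₗ[ℝ] ℝ) → (V₂ →ₗ[ℝ] ℝ)} {D : Ω → V₂ → V₁}
    (hD : ∀ x, ∀ s ∈ S₁, ∀ b : V₂, 0 ≤ b → b ≤ u₂ → s (D x b) = I x s b)
    {s : V₁ →ₗ[ℝ] ℝ} (hs : s ∈ S₁) {b : V₂} (hb0 : 0 ≤ b) (hbu : b ≤ u₂) :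
    s (∑ x ∈ t, D x b) = (∑ x ∈ t, I x s) b := by
  rw [map_sum, LinearMap.sum_apply]
  exact Finset.sum_congr rfl fun x _ => hD x s hs b hb0 hbu

variable [PartialOrder V₁] [IsOrderedAddMonoid V₁]

theorem map_sum_of_dual (hS₁ : IsStateSpace u₁ S₁) {ι : Type*} (t : Finset ι)
    {J : (V₁ →ₗ[ℝ] ℝ) → (V₂ →ₗ[ℝ] ℝ)} {D : V₂ → V₁}
    (hD : ∀ s ∈ S₁, ∀ b : V₂, 0 ≤ b → b ≤ u₂ → s (D b) = J s b)
    {B : ι → V₂} (hB : ∀ y ∈ t, 0 ≤ B y ∧ B y ≤ u₂)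
    (hsum0 : 0 ≤ ∑ y ∈ t, B y) (hsumu : ∑ y ∈ t, B y ≤ u₂) :
    ∑ y ∈ t, D (B y) = D (∑ y ∈ t, B y) := by
  refine hS₁.ext fun s hs => ?_
  rw [map_sum, hD s hs _ hsum0 hsumu, map_sum]
  exact Finset.sum_congr rfl fun y hy => hD s hs _ (hB y hy).1 (hB y hy).2

variable [IsOrderedAddMonoid V₂] {S₂ : Set (V₂ →ₗ[ℝ] ℝ)}
  {Ω : Type*} [Fintype Ω] {I : Ω → (V₁ →ₗ[ℝ] ℝ) → (V₂ →ₗ[ℝ] ℝ)} {D : Ω → V₂ → V₁}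

theorem sum_dual_nonneg_and_le (hS₁ : IsStateSpace u₁ S₁) (hS₂ : IsStateSpace u₂ S₂)
    (hIch : ∀ s ∈ S₁, (∑ x, I x s) ∈ S₂)
    (hD : ∀ x, ∀ s ∈ S₁, ∀ b : V₂, 0 ≤ b → b ≤ u₂ → s (D x b) = I x s b)
    {b : V₂} (hb0 : 0 ≤ b) (hbu : b ≤ u₂) :
    0 ≤ ∑ x, D x b ∧ ∑ x, D x b ≤ u₁ :=
  hS₁.nonneg_and_le_of_forall_apply_mem_Icc fun s hs => by
    rw [apply_sum_of_dual _ hD hs hb0 hbu]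
    exact hS₂.apply_mem_Icc (hIch s hs) hb0 hbu

theorem sum_dual_unit (hS₁ : IsStateSpace u₁ S₁) (hS₂ : IsStateSpace u₂ S₂)
    (hIch : ∀ s ∈ S₁, (∑ x, I x s) ∈ S₂) (hu₂0 : 0 ≤ u₂)
    (hD : ∀ x, ∀ s ∈ S₁, ∀ b : V₂, 0 ≤ b → b ≤ u₂ → s (D x b) = I x s b) :
    ∑ x, D x u₂ = u₁ :=
  hS₁.ext fun s hs => by
    rw [apply_sum_of_dual _ hD hs hu₂0 le_rfl, (hS₂.2.1 _ (hIch s hs)).2, (hS₁.2.1 s hs).2]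

end Dual

theorem stmt_15_general
    {V₁ V₂ : Type*} [AddCommGroup V₁] [PartialOrder V₁] [IsOrderedAddMonoid V₁] [Module ℝ V₁]
    [AddCommGroup V₂] [PartialOrder V₂] [IsOrderedAddMonoid V₂] [Module ℝ V₂]
    (u₁ : V₁)
    (u₂ : V₂) (hu₂0 : 0 ≤ u₂)
    (S₁ : Set (V₁ →ₗ[ℝ] ℝ)) (S₂ : Set (V₂ →ₗ[ℝ] ℝ))
    (hS₁ : IsStateSpace u₁ S₁) (hS₂ : IsStateSpace u₂ S₂)
    {Ω : Type*} [Fintype Ω]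
    {ΩB : Type*} [Fintype ΩB]
    (I : Ω → (V₁ →ₗ[ℝ] ℝ) → (V₂ →ₗ[ℝ] ℝ))
    (hIch : ∀ s ∈ S₁, (∑ x, I x s) ∈ S₂)
    (D : Ω → V₂ → V₁)
    (hDE : ∀ x, ∀ b : V₂, 0 ≤ b → b ≤ u₂ → 0 ≤ D x b ∧ D x b ≤ u₁)
    (hD : ∀ x, ∀ s ∈ S₁, ∀ b : V₂, 0 ≤ b → b ≤ u₂ → s (D x b) = I x s b)
    (B : ΩB → V₂) (hBE : ∀ y, 0 ≤ B y ∧ B y ≤ u₂)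
    (hBobs : (∑ y, B y) = u₂) :
    (∑ x, ∑ y, D x (B y)) = u₁ ∧
    ((∀ x, 0 ≤ D x u₂ ∧ D x u₂ ≤ u₁) ∧ (∑ x, D x u₂) = u₁) ∧
    (∀ x, (∑ y, D x (B y)) = D x u₂) ∧
    ((∀ y, 0 ≤ (∑ x, D x (B y)) ∧ (∑ x, D x (B y)) ≤ u₁) ∧
      (∑ y, ∑ x, D x (B y)) = u₁) := by
  have hrow : ∀ x, ∑ y, D x (B y) = D x u₂ := fun x => by
    simpa only [hBobs] using map_sum_of_dual hS₁ Finset.univ (hD x) (fun y _ => hBE y)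
      (hBobs ▸ hu₂0) hBobs.le
  have hunit : ∑ x, D x u₂ = u₁ := sum_dual_unit hS₁ hS₂ hIch hu₂0 hD
  refine ⟨by simp only [hrow, hunit], ⟨fun x => hDE x u₂ hu₂0 le_rfl, hunit⟩, hrow,
    fun y => sum_dual_nonneg_and_le hS₁ hS₂ hIch hD (hBE y).1 (hBE y).2, ?_⟩
  rw [Finset.sum_comm]
  simp only [hrow, hunit]

theorem stmt_15
    {V₁ V₂ : Type*} [AddCommGroup V₁] [PartialOrder V₁] [IsOrderedAddMonoid V₁] [Module ℝ V₁]
    [AddCommGroup V₂] [PartialOrder V₂] [IsOrderedAddMonoid V₂] [Module ℝ V₂]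
    (hsmul₁ : ∀ (c : ℝ) (x : V₁), 0 ≤ c → 0 ≤ x → 0 ≤ c • x)
    (hsmul₂ : ∀ (c : ℝ) (x : V₂), 0 ≤ c → 0 ≤ x → 0 ≤ c • x)
    (u₁ : V₁) (hu₁0 : 0 ≤ u₁) (hu₁ne : u₁ ≠ 0)
    (u₂ : V₂) (hu₂0 : 0 ≤ u₂) (hu₂ne : u₂ ≠ 0)
    (S₁ : Set (V₁ →ₗ[ℝ] ℝ)) (S₂ : Set (V₂ →ₗ[ℝ] ℝ))
    (hS₁ : IsStateSpace u₁ S₁) (hS₂ : IsStateSpace u₂ S₂)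
    {Ω : Type*} [Fintype Ω] [Nonempty Ω]
    {ΩB : Type*} [Fintype ΩB] [Nonempty ΩB]
    (I : Ω → (V₁ →ₗ[ℝ] ℝ) → (V₂ →ₗ[ℝ] ℝ))
    (hIop : ∀ x, IsOperation S₁ S₂ (I x))
    (hIch : ∀ s ∈ S₁, (∑ x, I x s) ∈ S₂)
    (D : Ω → V₂ → V₁)
    (hDE : ∀ x, ∀ b : V₂, 0 ≤ b → b ≤ u₂ → 0 ≤ D x b ∧ D x b ≤ u₁)
    (hD : ∀ x, ∀ s ∈ S₁, ∀ b : V₂, 0 ≤ b → b ≤ u₂ → s (D x b) = I x s b)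
    (B : ΩB → V₂) (hBE : ∀ y, 0 ≤ B y ∧ B y ≤ u₂)
    (hBobs : (∑ y, B y) = u₂) :
    (∑ x, ∑ y, D x (B y)) = u₁ ∧
    ((∀ x, 0 ≤ D x u₂ ∧ D x u₂ ≤ u₁) ∧ (∑ x, D x u₂) = u₁) ∧
    (∀ x, (∑ y, D x (B y)) = D x u₂) ∧
    ((∀ y, 0 ≤ (∑ x, D x (B y)) ∧ (∑ x, D x (B y)) ≤ u₁) ∧
      (∑ y, ∑ x, D x (B y)) = u₁) :=
  stmt_15_general u₁ u₂ hu₂0 S₁ S₂ hS₁ hS₂ I hIch D hDE hD B hBE hBobs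
end

section
/- Let A = (Aₓ)_{x∈Ω_A} be an observable on E₁ with states αₓ ∈ S₂ (x ∈ Ω_A), and let B = (B_y)_{y∈Ω_B} be an observable on E₂ with states β_y ∈ S₃ (y ∈ Ω_B). Define the pure Holevo instruments 𝓘ₓ(γ) = γ(Aₓ) • αₓ for γ ∈ S₁ and Ĵ_y(φ) = φ(B_y) • β_y for any positive linear functional φ on V₂. Then for all γ ∈ S₁, x ∈ Ω_A, y ∈ Ω_B: Ĵ_y(𝓘ₓ(γ)) = γ((A∘B)_{xy}) • β_y, where (A∘B)_{xy} := αₓ(B_y) • Aₓ; moreover (A∘B)_{xy} ∈ E₁ for all x, y and ∑_{x∈Ω_A} ∑_{y∈Ω_B} (A∘B)_{xy} = u₁, so the composed instrument is the pure Holevo bi-instrument with effects (A∘B)_{xy} and states β'_{xy} = β_y. -/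
/-!
The composition formula is linearity of `γ`. Since `αₓ` is a state, `αₓ(B_y) ∈ [0, 1]`, so
`αₓ(B_y) Aₓ` is again an effect, and `∑_y αₓ(B_y) = αₓ(u₂) = 1` gives the normalisation.
-/

section

variable {V : Type*} [AddCommGroup V] [PartialOrder V] [IsOrderedAddMonoid V] [Module ℝ V]

namespace IsStateSpace

variable {u : V} {S : Set (V →ₗ[ℝ] ℝ)} {s : V →ₗ[ℝ] ℝ}

theorem apply_nonneg (hS : IsStateSpace u S) (hs : s ∈ S) {b : V} (hb : 0 ≤ b) : 0 ≤ s b :=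
  (hS.2.1 s hs).1 b hb

theorem apply_unit (hS : IsStateSpace u S) (hs : s ∈ S) : s u = 1 :=
  (hS.2.1 s hs).2

theorem apply_le_one (hS : IsStateSpace u S) (hs : s ∈ S) {b : V} (hb : b ≤ u) : s b ≤ 1 := by
  have h := hS.apply_nonneg hs (sub_nonneg.mpr hb)
  rwa [map_sub, hS.apply_unit hs, sub_nonneg] at h

end IsStateSpace

theorem smul_mem_Icc_of_mem_Icc (hsmul : ∀ (c : ℝ) (x : V), 0 ≤ c → 0 ≤ x → 0 ≤ c • x)
    {c : ℝ} (hc : c ∈ Set.Icc (0 : ℝ) 1) {a u : V} (ha : a ∈ Set.Icc 0 u) :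
    c • a ∈ Set.Icc 0 u := by
  refine ⟨hsmul c a hc.1 ha.1, le_trans ?_ ha.2⟩
  have h := hsmul (1 - c) a (sub_nonneg.mpr hc.2) ha.1
  rwa [sub_smul, one_smul, sub_nonneg] at h

end

section

variable {R V W : Type*} [CommSemiring R] [AddCommMonoid V] [Module R V]
  [AddCommMonoid W] [Module R W]

theorem sum_sum_apply_smul_eq_sum {ι κ : Type*} [Fintype ι] [Fintype κ]
    (A : ι → V) (φ : ι → W →ₗ[R] R) (B : κ → W) (hφ : ∀ x, φ x (∑ y, B y) = 1) :
    ∑ x, ∑ y, φ x (B y) • A x = ∑ x, A x := by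
  refine Finset.sum_congr rfl fun x _ => ?_
  rw [← Finset.sum_smul, ← map_sum, hφ x, one_smul]

theorem smul_apply_eq_apply_smul (γ : V →ₗ[R] R) (a : V) (φ : W →ₗ[R] R) (b : W) :
    (γ a • φ) b = γ (φ b • a) := by
  rw [LinearMap.smul_apply, map_smul, smul_eq_mul, smul_eq_mul, mul_comm]

end

theorem stmt_16_general
    {V₁ V₂ V₃ : Type*} [AddCommGroup V₁] [PartialOrder V₁] [IsOrderedAddMonoid V₁] [Module ℝ V₁]
    [AddCommGroup V₂] [PartialOrder V₂] [IsOrderedAddMonoid V₂] [Module ℝ V₂]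
    [AddCommGroup V₃] [Module ℝ V₃]
    (hsmul₁ : ∀ (c : ℝ) (x : V₁), 0 ≤ c → 0 ≤ x → 0 ≤ c • x)
    (u₁ : V₁)
    (u₂ : V₂)
    (S₁ : Set (V₁ →ₗ[ℝ] ℝ)) (S₂ : Set (V₂ →ₗ[ℝ] ℝ))
    (hS₂ : IsStateSpace u₂ S₂)
    {ΩA ΩB : Type*} [Fintype ΩA] [Fintype ΩB]
    (A : ΩA → V₁) (hAE : ∀ x, 0 ≤ A x ∧ A x ≤ u₁) (hAobs : (∑ x, A x) = u₁)
    (α : ΩA → (V₂ →ₗ[ℝ] ℝ)) (hα : ∀ x, α x ∈ S₂)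
    (B : ΩB → V₂) (hBE : ∀ y, 0 ≤ B y ∧ B y ≤ u₂) (hBobs : (∑ y, B y) = u₂)
    (β : ΩB → (V₃ →ₗ[ℝ] ℝ))
    (I : ΩA → (V₁ →ₗ[ℝ] ℝ) → (V₂ →ₗ[ℝ] ℝ))
    (hIdef : ∀ x γ, I x γ = γ (A x) • α x)
    (J : ΩB → (V₂ →ₗ[ℝ] ℝ) → (V₃ →ₗ[ℝ] ℝ))
    (hJdef : ∀ y φ, J y φ = φ (B y) • β y) :
    (∀ γ ∈ S₁, ∀ (x : ΩA) (y : ΩB),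
      J y (I x γ) = γ (α x (B y) • A x) • β y) ∧
    (∀ (x : ΩA) (y : ΩB), 0 ≤ α x (B y) • A x ∧ α x (B y) • A x ≤ u₁) ∧
    (∑ x, ∑ y, α x (B y) • A x) = u₁ := by
  refine ⟨fun γ _ x y => ?_, fun x y => ?_, ?_⟩
  · rw [hJdef, hIdef, smul_apply_eq_apply_smul]
  · exact smul_mem_Icc_of_mem_Icc hsmul₁
      ⟨hS₂.apply_nonneg (hα x) (hBE y).1, hS₂.apply_le_one (hα x) (hBE y).2⟩ (hAE x)
  · rw [sum_sum_apply_smul_eq_sum A α B fun x => by rw [hBobs, hS₂.apply_unit (hα x)], hAobs]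

theorem stmt_16
    {V₁ V₂ V₃ : Type*} [AddCommGroup V₁] [PartialOrder V₁] [IsOrderedAddMonoid V₁] [Module ℝ V₁]
    [AddCommGroup V₂] [PartialOrder V₂] [IsOrderedAddMonoid V₂] [Module ℝ V₂]
    [AddCommGroup V₃] [PartialOrder V₃] [IsOrderedAddMonoid V₃] [Module ℝ V₃]
    (hsmul₁ : ∀ (c : ℝ) (x : V₁), 0 ≤ c → 0 ≤ x → 0 ≤ c • x)
    (hsmul₂ : ∀ (c : ℝ) (x : V₂), 0 ≤ c → 0 ≤ x → 0 ≤ c • x)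
    (hsmul₃ : ∀ (c : ℝ) (x : V₃), 0 ≤ c → 0 ≤ x → 0 ≤ c • x)
    (u₁ : V₁) (hu₁0 : 0 ≤ u₁) (hu₁ne : u₁ ≠ 0)
    (u₂ : V₂) (hu₂0 : 0 ≤ u₂) (hu₂ne : u₂ ≠ 0)
    (u₃ : V₃) (hu₃0 : 0 ≤ u₃) (hu₃ne : u₃ ≠ 0)
    (S₁ : Set (V₁ →ₗ[ℝ] ℝ)) (S₂ : Set (V₂ →ₗ[ℝ] ℝ)) (S₃ : Set (V₃ →ₗ[ℝ] ℝ))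
    (hS₁ : IsStateSpace u₁ S₁) (hS₂ : IsStateSpace u₂ S₂) (hS₃ : IsStateSpace u₃ S₃)
    {ΩA ΩB : Type*} [Fintype ΩA] [Nonempty ΩA] [Fintype ΩB] [Nonempty ΩB]
    (A : ΩA → V₁) (hAE : ∀ x, 0 ≤ A x ∧ A x ≤ u₁) (hAobs : (∑ x, A x) = u₁)
    (α : ΩA → (V₂ →ₗ[ℝ] ℝ)) (hα : ∀ x, α x ∈ S₂)
    (B : ΩB → V₂) (hBE : ∀ y, 0 ≤ B y ∧ B y ≤ u₂) (hBobs : (∑ y, B y) = u₂)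
    (β : ΩB → (V₃ →ₗ[ℝ] ℝ)) (hβ : ∀ y, β y ∈ S₃)
    (I : ΩA → (V₁ →ₗ[ℝ] ℝ) → (V₂ →ₗ[ℝ] ℝ))
    (hIdef : ∀ x γ, I x γ = γ (A x) • α x)
    (J : ΩB → (V₂ →ₗ[ℝ] ℝ) → (V₃ →ₗ[ℝ] ℝ))
    (hJdef : ∀ y φ, J y φ = φ (B y) • β y) :
    (∀ γ ∈ S₁, ∀ (x : ΩA) (y : ΩB),
      J y (I x γ) = γ (α x (B y) • A x) • β y) ∧
    (∀ (x : ΩA) (y : ΩB), 0 ≤ α x (B y) • A x ∧ α x (B y) • A x ≤ u₁) ∧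
    (∑ x, ∑ y, α x (B y) • A x) = u₁ :=
  stmt_16_general hsmul₁ u₁ u₂ S₁ S₂ hS₂ A hAE hAobs α hα B hBE hBobs β I hIdef J hJdef
end
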